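/- Let 𝕐 ⊆ ℙ^{s−1} with dim(S/I(𝕐)) = 1 (Krull dimension). Then I(𝕐) is a binomial ideal if and only if 𝕐 ∪ {[0]} is a submonoid of ℙ^{s−1} ∪ {[0]} under componentwise multiplication. -/

import Mathlib

open MvPolynomial

noncomputable section

variable {K : Type} [Field K] {s : ℕ}

def IsBinomialIdeal {σ : Type} (I : Ideal (MvPolynomial σ K)) : Prop :=
  ∃ B : Set (MvPolynomial σ K),
    (∀ f ∈ B, ∃ a b : σ →₀ ℕ, f = monomial a 1 - monomial b 1) ∧ I = Ideal.span B

def affineVanishingIdeal (Y : Set (Fin s → K)) : Ideal (MvPolynomial (Fin s) K) :=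
  Ideal.span {f | ∀ α ∈ Y, eval α f = 0}

def affineZeroSet (I : Ideal (MvPolynomial (Fin s) K)) : Set (Fin s → K) :=
  {α | ∀ f ∈ I, eval α f = 0}

def projVanishingIdeal (Y : Set (Projectivization K (Fin s → K))) :
    Ideal (MvPolynomial (Fin s) K) :=
  Ideal.span {f | (∃ n, f.IsHomogeneous n) ∧
    ∀ (α : Fin s → K) (hα : α ≠ 0), Projectivization.mk K α hα ∈ Y → eval α f = 0}

def projZeroSet (I : Ideal (MvPolynomial (Fin s) K)) :
    Set (Projectivization K (Fin s → K)) :=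
  {p | ∀ f ∈ I, (∃ n, f.IsHomogeneous n) →
    ∀ (α : Fin s → K) (hα : α ≠ 0), Projectivization.mk K α hα = p → eval α f = 0}

def IsProjSubmonoid (Y : Set (Projectivization K (Fin s → K))) : Prop :=
  (∀ h1 : (1 : Fin s → K) ≠ 0, Projectivization.mk K 1 h1 ∈ Y) ∧
  ∀ (α β : Fin s → K) (hα : α ≠ 0) (hβ : β ≠ 0),
    Projectivization.mk K α hα ∈ Y → Projectivization.mk K β hβ ∈ Y →
    ∀ hab : α * β ≠ 0, Projectivization.mk K (α * β) hab ∈ Y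

def projTorus (K : Type) [Field K] (s : ℕ) : Set (Projectivization K (Fin s → K)) :=
  {p | ∀ (α : Fin s → K) (hα : α ≠ 0), Projectivization.mk K α hα = p → ∀ i, α i ≠ 0}

def IsTorusSubgroup (Y : Set (Projectivization K (Fin s → K))) : Prop :=
  Y ⊆ projTorus K s ∧ IsProjSubmonoid Y ∧
  ∀ (α : Fin s → K) (hα : α ≠ 0), Projectivization.mk K α hα ∈ Y →
    ∀ hinv : α⁻¹ ≠ 0, Projectivization.mk K α⁻¹ hinv ∈ Y

def IsLatticeIdeal (I : Ideal (MvPolynomial (Fin s) K)) : Prop :=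
  IsBinomialIdeal I ∧ ∀ (i : Fin s) (f : MvPolynomial (Fin s) K), X i * f ∈ I → f ∈ I

def IsGradedIdeal {σ : Type} (I : Ideal (MvPolynomial σ K)) : Prop :=
  ∀ f ∈ I, ∀ n, homogeneousComponent n f ∈ I


/-!
The condition `dim S/I(𝕐) = 1` forces `𝕐` to be finite, and for finite `𝕐` the zero set of `I(𝕐)`
away from the origin is exactly the cone over `𝕐`, since points are separated by products of linear
forms. The zero set of a binomial ideal contains `1` and is closed under componentwise products,
which gives one direction.

Conversely, if `𝕐` is a monoid then so is its affine cone `C`, and each monomial `xᵃ` restricts to a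
character `χₐ` of `C`. Grouping the monomials of a homogeneous `f ∈ I(𝕐)` by their characters
writes `f` as a combination of binomials `xᵃ - xᵇ` with `χₐ = χᵇ`, plus a remainder whose
monomials have pairwise distinct characters and which vanishes on `C`; by Artin's independence of
characters the remainder is zero.
-/

open scoped LinearAlgebra.Projectivization Polynomial

variable {σ : Type*}

def monomialChar (a : σ →₀ ℕ) : (σ → K) →* K where
  toFun x := a.prod fun i e => x i ^ e
  map_one' := by simp
  map_mul' x y := by simp only [Pi.mul_apply, mul_pow, Finsupp.prod_mul]

lemma eval_monomial_one (a : σ →₀ ℕ) (x : σ → K) :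
    eval x (monomial a 1) = monomialChar a x := by
  rw [eval_monomial, one_mul]; rfl

lemma eval_eq_sum_coeff_mul_monomialChar (x : σ → K) (f : MvPolynomial σ K) :
    eval x f = ∑ a ∈ f.support, coeff a f * monomialChar a x :=
  eval_eq x f

theorem eq_zero_of_forall_eval_eq_zero_of_injOn (M : Submonoid (σ → K)) {g : MvPolynomial σ K}
    (hg : ∀ x ∈ M, eval x g = 0)
    (hinj : ∀ a ∈ g.support, ∀ b ∈ g.support,
      Set.EqOn (monomialChar a) (monomialChar b) (M : Set (σ → K)) → a = b) :
    g = 0 := by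
  let χ : g.support → (M →* K) := fun a => (monomialChar a.1).comp M.subtype
  have hχ : Function.Injective χ := fun a b hab =>
    Subtype.ext (hinj a a.2 b b.2 fun x hx => DFunLike.congr_fun hab ⟨x, hx⟩)
  have hcoeff := Fintype.linearIndependent_iff.mp ((linearIndependent_monoidHom M K).comp χ hχ)
    (fun a => coeff a g) (by
      funext x
      simp only [Finset.sum_apply, Pi.smul_apply, Function.comp_apply, smul_eq_mul,
        Pi.zero_apply, χ, MonoidHom.coe_comp, Submonoid.coe_subtype]
      rw [Finset.univ_eq_attach,
        Finset.sum_attach g.support (fun a => coeff a g * monomialChar a x),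
        ← eval_eq_sum_coeff_mul_monomialChar]
      exact hg x x.2)
  ext a
  by_cases ha : a ∈ g.support
  · exact hcoeff ⟨a, ha⟩
  · exact notMem_support_iff.mp ha

theorem mem_span_binomials_of_forall_eval_eq_zero (M : Submonoid (σ → K))
    {f : MvPolynomial σ K} (hf : ∀ x ∈ M, eval x f = 0) :
    f ∈ Ideal.span {g | ∃ a ∈ f.support, ∃ b ∈ f.support,
      Set.EqOn (monomialChar a) (monomialChar b) (M : Set (σ → K)) ∧
        g = monomial a 1 - monomial b 1} := by
  classical
  set S := f.support
  set B : Set (MvPolynomial σ K) := {g | ∃ a ∈ S, ∃ b ∈ S,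
      Set.EqOn (monomialChar a) (monomialChar b) (M : Set (σ → K)) ∧
        g = monomial a 1 - monomial b 1}
  let χ : (σ →₀ ℕ) → (M →* K) := fun a => (monomialChar a).comp M.subtype
  -- `r a` is a monomial of `f` with the same character as `a`, depending only on `χ a`
  let r a := Function.invFunOn χ S (χ a)
  have hr_mem : ∀ a ∈ S, r a ∈ S := fun a ha => Function.invFunOn_mem ⟨a, ha, rfl⟩
  have hr_eq : ∀ a ∈ S, χ (r a) = χ a := fun a ha => Function.invFunOn_eq ⟨a, ha, rfl⟩
  have hr_eqOn : ∀ a ∈ S, Set.EqOn (monomialChar a) (monomialChar (r a)) M :=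
    fun a ha x hx => DFunLike.congr_fun (hr_eq a ha).symm ⟨x, hx⟩
  set g := ∑ a ∈ S, monomial (r a) (coeff a f)
  have hfg : f - g = ∑ a ∈ S, C (coeff a f) * (monomial a 1 - monomial (r a) 1) := by
    conv_lhs => rw [f.as_sum]
    rw [← Finset.sum_sub_distrib]
    refine Finset.sum_congr rfl fun a _ => ?_
    rw [mul_sub, C_mul_monomial, C_mul_monomial, mul_one]
  have hfg_mem : f - g ∈ Ideal.span B := by
    rw [hfg]
    exact Ideal.sum_mem _ fun a ha => Ideal.mul_mem_left _ _
      (Ideal.subset_span ⟨a, ha, r a, hr_mem a ha, hr_eqOn a ha, rfl⟩)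
  have hg : g = 0 := by
    refine eq_zero_of_forall_eval_eq_zero_of_injOn M (fun x hx => ?_) ?_
    · have hfgx : eval x (f - g) = 0 := by
        rw [hfg, map_sum]
        refine Finset.sum_eq_zero fun a ha => ?_
        rw [map_mul, map_sub, eval_monomial_one, eval_monomial_one, hr_eqOn a ha hx, sub_self,
          mul_zero]
      rwa [map_sub, hf x hx, zero_sub, neg_eq_zero] at hfgx
    · have hsupp : g.support ⊆ S.image r :=
        support_sum.trans (Finset.biUnion_subset.mpr fun a ha => support_monomial_subset.trans
          (Finset.singleton_subset_iff.mpr (Finset.mem_image_of_mem r ha)))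
      intro a ha b hb hab
      obtain ⟨a', ha', rfl⟩ := Finset.mem_image.mp (hsupp ha)
      obtain ⟨b', hb', rfl⟩ := Finset.mem_image.mp (hsupp hb)
      have hχ : χ a' = χ b' := by
        rw [← hr_eq a' ha', ← hr_eq b' hb']
        exact MonoidHom.ext fun x => hab x.2
      exact congrArg (Function.invFunOn χ S) hχ
  simpa [hg] using hfg_mem

theorem MvPolynomial.IsHomogeneous.aeval_mul_left {R A : Type*} [CommSemiring R] [CommSemiring A]
    [Algebra R A] {f : MvPolynomial σ R} {n : ℕ} (hf : f.IsHomogeneous n) (t : A) (x : σ → A) :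
    MvPolynomial.aeval (fun i => t * x i) f = t ^ n * MvPolynomial.aeval x f := by
  rw [f.as_sum, map_sum, map_sum, Finset.mul_sum]
  refine Finset.sum_congr rfl fun d hd => ?_
  simp only [aeval_monomial, mul_pow, Finsupp.prod_mul]
  rw [Finsupp.prod, Finset.prod_pow_eq_pow_sum, ← hf.degree_eq_sum_deg_support hd]
  ring

lemma Projectivization.mem_submodule_mk (v : σ → K) (hv : v ≠ 0) :
    v ∈ (mk K v hv).submodule := by
  rw [submodule_mk]; exact Submodule.mem_span_singleton_self v

open Projectivization in
theorem exists_linearForm_separating [Fintype σ] {p : ℙ K (σ → K)} {α : σ → K} (hα : α ≠ 0)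
    (hne : mk K α hα ≠ p) :
    ∃ ℓ : MvPolynomial σ K, ℓ.IsHomogeneous 1 ∧ (∀ v ∈ p.submodule, eval v ℓ = 0) ∧
      eval α ℓ ≠ 0 := by
  classical
  have hαp : α ∉ p.submodule := by
    rw [submodule_eq, Submodule.mem_span_singleton]
    rintro ⟨a, ha⟩
    exact hne (((mk_eq_mk_iff' K α p.rep hα p.rep_nonzero).mpr ⟨a, ha⟩).trans p.mk_rep)
  obtain ⟨φ, hφα, hφp⟩ := Submodule.exists_dual_map_eq_bot_of_notMem hαp inferInstance
  have heval : ∀ v, eval v (∑ i, C (φ (Pi.single i 1)) * X i) = φ v := fun v => by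
    conv_rhs => rw [← Finset.univ_sum_single v]
    rw [map_sum, map_sum]
    refine Finset.sum_congr rfl fun i _ => ?_
    rw [map_mul, eval_C, eval_X, mul_comm, ← smul_eq_mul, ← map_smul, ← Pi.single_smul',
      smul_eq_mul, mul_one]
  refine ⟨∑ i, C (φ (Pi.single i 1)) * X i,
    IsHomogeneous.sum _ _ _ fun i _ => isHomogeneous_C_mul_X _ i, fun v hv => ?_, by rwa [heval]⟩
  have hφv := Submodule.mem_map_of_mem (f := φ) hv
  rwa [hφp, Submodule.mem_bot, ← heval] at hφv

/-- The ideal of the line `p`, as the kernel of `xᵢ ↦ pᵢ t`. -/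
def pointIdeal (p : ℙ K (σ → K)) : Ideal (MvPolynomial σ K) :=
  RingHom.ker (aeval fun i => Polynomial.X * Polynomial.C (p.rep i) : MvPolynomial σ K →ₐ[K] K[X])

lemma pointIdeal_isPrime (p : ℙ K (σ → K)) : (pointIdeal p).IsPrime :=
  RingHom.ker_isPrime _

lemma MvPolynomial.IsHomogeneous.mem_pointIdeal_iff {f : MvPolynomial σ K} {n : ℕ}
    (hf : f.IsHomogeneous n) (p : ℙ K (σ → K)) : f ∈ pointIdeal p ↔ eval p.rep f = 0 := by
  have hC : MvPolynomial.aeval (fun i => Polynomial.C (p.rep i)) f = Polynomial.C (eval p.rep f) :=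
    aeval_algebraMap_apply K[X] p.rep f
  rw [pointIdeal, RingHom.mem_ker, hf.aeval_mul_left, hC]
  simp [Polynomial.X_ne_zero]

lemma pointIdeal_lt_ker_eval_zero (p : ℙ K (σ → K)) :
    pointIdeal p < RingHom.ker (eval (0 : σ → K)) := by
  refine SetLike.lt_iff_le_and_exists.mpr ⟨fun f hf => ?_, ?_⟩
  · have hcomp := DFunLike.congr_fun (comp_aeval
      (fun i => Polynomial.X * Polynomial.C (p.rep i)) (Polynomial.aeval (0 : K))) f
    simp only [AlgHom.comp_apply, map_mul, Polynomial.aeval_X, Polynomial.aeval_C, zero_mul]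
      at hcomp
    show eval (0 : σ → K) f = 0
    rw [show eval (0 : σ → K) f = _ from hcomp.symm, show _ = (0 : K[X]) from hf, map_zero]
  · obtain ⟨j, hj⟩ := Function.ne_iff.mp p.rep_nonzero
    exact ⟨X j, by simp, by simpa [(isHomogeneous_X K j).mem_pointIdeal_iff] using hj⟩

lemma pointIdeal_injective [Fintype σ] : Function.Injective (pointIdeal (K := K) (σ := σ)) := by
  intro p q hpq
  by_contra hne
  obtain ⟨ℓ, hℓ, hℓp, hℓq⟩ := exists_linearForm_separating q.rep_nonzero
    (by rw [q.mk_rep]; exact Ne.symm hne)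
  have hmem : ℓ ∈ pointIdeal p := (hℓ.mem_pointIdeal_iff p).mpr
    (hℓp _ (by simpa [p.mk_rep] using Projectivization.mem_submodule_mk p.rep p.rep_nonzero))
  rw [hpq, hℓ.mem_pointIdeal_iff] at hmem
  exact hℓq hmem
lemma projVanishingIdeal_le_pointIdeal {Y : Set (ℙ K (Fin s → K))} {p : ℙ K (Fin s → K)}
    (hp : p ∈ Y) : projVanishingIdeal Y ≤ pointIdeal p := by
  rw [projVanishingIdeal, Ideal.span_le]
  rintro f ⟨⟨n, hn⟩, hf⟩
  exact (hn.mem_pointIdeal_iff p).mpr (hf _ _ (by rwa [p.mk_rep]))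

/-- Each point `p` of `Y` gives a prime `pointIdeal p` over `I(Y)` which is not maximal, hence
minimal over `I(Y)` when `dim S/I(Y) ≤ 1`; a noetherian ring has finitely many minimal primes. -/
theorem finite_of_ringKrullDim_le_one {Y : Set (ℙ K (Fin s → K))}
    (hdim : ringKrullDim (MvPolynomial (Fin s) K ⧸ projVanishingIdeal Y) ≤ 1) : Y.Finite := by
  set I := projVanishingIdeal Y
  have hminmax : ∀ x : PrimeSpectrum.zeroLocus (I : Set (MvPolynomial (Fin s) K)),
      IsMin x ∨ IsMax x :=
    Order.krullDim_le_one_iff.mp (by rwa [← ringKrullDim_quotient])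
  have hmin : ∀ p ∈ Y, pointIdeal p ∈ I.minimalPrimes := by
    intro p hp
    have hIp := projVanishingIdeal_le_pointIdeal hp
    refine ⟨⟨pointIdeal_isPrime p, hIp⟩, fun q hq hqp => ?_⟩
    rcases hminmax ⟨⟨pointIdeal p, pointIdeal_isPrime p⟩, hIp⟩ with hx | hx
    · exact hx (b := ⟨⟨q, hq.1⟩, hq.2⟩) hqp
    · have hlt := pointIdeal_lt_ker_eval_zero p
      exact absurd (hx (b := ⟨⟨_, RingHom.ker_isPrime _⟩, hIp.trans hlt.le⟩) hlt.le) hlt.not_ge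
  exact Set.Finite.of_finite_image
    ((I.finite_minimalPrimes_of_isNoetherianRing).subset (Set.image_subset_iff.mpr hmin))
    pointIdeal_injective.injOn

lemma mem_affineZeroSet_span_iff {B : Set (MvPolynomial (Fin s) K)} {α : Fin s → K} :
    α ∈ affineZeroSet (Ideal.span B) ↔ ∀ g ∈ B, eval α g = 0 :=
  ⟨fun h g hg => h g (Ideal.subset_span hg),
    fun h _ hf => (Ideal.span_le (I := RingHom.ker (eval α))).mpr h hf⟩

lemma IsBinomialIdeal.one_mem_affineZeroSet {I : Ideal (MvPolynomial (Fin s) K)}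
    (hI : IsBinomialIdeal I) : (1 : Fin s → K) ∈ affineZeroSet I := by
  obtain ⟨B, hB, rfl⟩ := hI
  refine mem_affineZeroSet_span_iff.mpr fun g hg => ?_
  obtain ⟨a, b, rfl⟩ := hB g hg
  simp [eval_monomial_one]

lemma IsBinomialIdeal.mul_mem_affineZeroSet {I : Ideal (MvPolynomial (Fin s) K)}
    (hI : IsBinomialIdeal I) {α β : Fin s → K} (hα : α ∈ affineZeroSet I)
    (hβ : β ∈ affineZeroSet I) : α * β ∈ affineZeroSet I := by
  obtain ⟨B, hB, rfl⟩ := hI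
  rw [mem_affineZeroSet_span_iff] at hα hβ ⊢
  intro g hg
  obtain ⟨a, b, rfl⟩ := hB g hg
  have hαab := hα _ hg
  have hβab := hβ _ hg
  simp only [map_sub, eval_monomial_one, sub_eq_zero] at hαab hβab ⊢
  rw [map_mul, map_mul, hαab, hβab]

theorem mem_affineZeroSet_projVanishingIdeal_iff {Y : Set (ℙ K (Fin s → K))} (hY : Y.Finite)
    {α : Fin s → K} (hα : α ≠ 0) :
    α ∈ affineZeroSet (projVanishingIdeal Y) ↔ Projectivization.mk K α hα ∈ Y := by
  refine ⟨fun hαZ => ?_, fun hαY => mem_affineZeroSet_span_iff.mpr fun f hf => hf.2 α hα hαY⟩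
  by_contra hαY
  have hsep : ∀ p ∈ Y, ∃ ℓ : MvPolynomial (Fin s) K, ℓ.IsHomogeneous 1 ∧
      (∀ v ∈ p.submodule, eval v ℓ = 0) ∧ eval α ℓ ≠ 0 :=
    fun p hp => exists_linearForm_separating hα (ne_of_mem_of_not_mem hp hαY).symm
  choose! ℓ hℓ using hsep
  have hf : ∏ p ∈ hY.toFinset, ℓ p ∈ projVanishingIdeal Y := by
    refine Ideal.subset_span ⟨⟨_, IsHomogeneous.prod _ _ _ fun p hp =>
      (hℓ p (hY.mem_toFinset.mp hp)).1⟩, fun β hβ hβY => ?_⟩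
    rw [map_prod]
    exact Finset.prod_eq_zero (hY.mem_toFinset.mpr hβY)
      ((hℓ _ hβY).2.1 β (Projectivization.mem_submodule_mk β hβ))
  have hαf := hαZ _ hf
  rw [map_prod] at hαf
  exact Finset.prod_ne_zero_iff.mpr (fun p hp => (hℓ p (hY.mem_toFinset.mp hp)).2.2) hαf

/-- The affine cone over `Y`; the origin belongs to it vacuously. -/
def affineCone (Y : Set (ℙ K (σ → K))) : Set (σ → K) :=
  {α | ∀ hα : α ≠ 0, Projectivization.mk K α hα ∈ Y}

def IsProjSubmonoid.toSubmonoid {Y : Set (ℙ K (Fin s → K))} (hY : IsProjSubmonoid Y) :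
    Submonoid (Fin s → K) where
  carrier := affineCone Y
  one_mem' := hY.1
  mul_mem' {α β} hα hβ hαβ :=
    hY.2 α β _ _ (hα (left_ne_zero_of_mul hαβ)) (hβ (right_ne_zero_of_mul hαβ)) hαβ

theorem isBinomialIdeal_projVanishingIdeal (hs : 0 < s) {Y : Set (ℙ K (Fin s → K))}
    (hY : IsProjSubmonoid Y) : IsBinomialIdeal (projVanishingIdeal Y) := by
  refine ⟨{g | ((∃ n, g.IsHomogeneous n) ∧
      ∀ (α : Fin s → K) (hα : α ≠ 0), Projectivization.mk K α hα ∈ Y → eval α g = 0) ∧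
      ∃ a b : Fin s →₀ ℕ, g = monomial a 1 - monomial b 1}, fun g hg => hg.2,
    le_antisymm ?_ (Ideal.span_mono fun g hg => hg.1)⟩
  rw [projVanishingIdeal, Ideal.span_le]
  rintro f ⟨⟨n, hf⟩, hfY⟩
  have hfM : ∀ x ∈ hY.toSubmonoid, eval x f = 0 := by
    intro x hx
    by_cases hx0 : x = 0
    · have h1 : (1 : Fin s → K) ≠ 0 := Function.ne_iff.mpr ⟨⟨0, hs⟩, one_ne_zero⟩
      have h01 : eval 0 f = 0 ^ n * eval 1 f := by
        have h := hf.aeval_mul_left (0 : K) 1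
        simp only [zero_mul] at h
        rwa [← coe_aeval_eq_eval, ← coe_aeval_eq_eval]
      rw [hx0, h01, hfY 1 h1 (hY.1 h1), mul_zero]
    · exact hfY x hx0 (hx hx0)
  have hdeg : ∀ a ∈ f.support, a.degree = n := fun a ha => by
    rw [Finsupp.degree_apply, ← hf.degree_eq_sum_deg_support ha]
  refine Ideal.span_mono ?_ (mem_span_binomials_of_forall_eval_eq_zero _ hfM)
  rintro g ⟨a, ha, b, hb, hab, rfl⟩
  refine ⟨⟨⟨n, (isHomogeneous_monomial _ (hdeg a ha)).sub (isHomogeneous_monomial _ (hdeg b hb))⟩,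
    fun α hα hαY => ?_⟩, a, b, rfl⟩
  rw [map_sub, eval_monomial_one, eval_monomial_one, hab (fun _ => hαY), sub_self]

theorem dim_one_binomial_iff_monoid (hs : 0 < s)
    (Y : Set (Projectivization K (Fin s → K)))
    (hdim : ringKrullDim (MvPolynomial (Fin s) K ⧸ projVanishingIdeal Y) = 1) :
    IsBinomialIdeal (projVanishingIdeal Y) ↔ IsProjSubmonoid Y := by
  refine ⟨fun hI => ?_, isBinomialIdeal_projVanishingIdeal hs⟩
  have hY : Y.Finite := finite_of_ringKrullDim_le_one hdim.le
  refine ⟨fun h1 => ?_, fun α β hα hβ hαY hβY hαβ => ?_⟩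
  · exact (mem_affineZeroSet_projVanishingIdeal_iff hY h1).mp hI.one_mem_affineZeroSet
  · rw [← mem_affineZeroSet_projVanishingIdeal_iff hY] at hαY hβY ⊢
    exact hI.mul_mem_affineZeroSet hαY hβY
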